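/- Each subspace V_s = span{v_s, f·v_s} ⊆ V^{⊗k} is a 2-dimensional irreducible gl(1|1)-submodule with highest weight vector v_s of weight [|s|+1, k−1−|s|]: e·v_s = 0, f·(f·v_s) = 0, e·(f·v_s) = k·v_s, h₁·v_s = (|s|+1)v_s, h₂·v_s = (k−1−|s|)v_s, h₁·(f v_s) = |s|·f v_s, h₂·(f v_s) = (k−|s|)·f v_s. -/
import Mathlib


noncomputable section

/-- `V^{⊗k}` for the two-dimensional module `V = ℂx ⊕ ℂy`, realized as functions on
words `w : Fin k → Bool` (`false` = `x` (even), `true` = `y` (odd)). -/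
abbrev TensorV (k : ℕ) : Type := (Fin k → Bool) → ℂ

/-- The sign `(-1)^{#odd factors strictly before position i}` in the graded Leibniz rule. -/
def glSgn {k : ℕ} (w : Fin k → Bool) (i : Fin k) : ℂ :=
  (-1 : ℂ) ^ (Finset.univ.filter (fun j => j < i ∧ w j = true)).card

/-- The action of `e ∈ gl(1|1)` on `V^{⊗k}` (graded Leibniz rule, `e·y = x`, `e·x = 0`). -/
def Eop (k : ℕ) : TensorV k →ₗ[ℂ] TensorV k :=
  LinearMap.pi fun w =>
    ∑ i ∈ Finset.univ.filter (fun i => w i = false),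
      glSgn w i • LinearMap.proj (R := ℂ) (φ := fun _ => ℂ) (Function.update w i true)

/-- The action of `f ∈ gl(1|1)` on `V^{⊗k}` (graded Leibniz rule, `f·x = y`, `f·y = 0`). -/
def Fop (k : ℕ) : TensorV k →ₗ[ℂ] TensorV k :=
  LinearMap.pi fun w =>
    ∑ i ∈ Finset.univ.filter (fun i => w i = true),
      glSgn w i • LinearMap.proj (R := ℂ) (φ := fun _ => ℂ) (Function.update w i false)

/-- The action of `h₁ ∈ gl(1|1)` on `V^{⊗k}`: a word is scaled by its number of `x`'s. -/
def H1op (k : ℕ) : TensorV k →ₗ[ℂ] TensorV k :=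
  LinearMap.pi fun w =>
    ((Finset.univ.filter (fun i => w i = false)).card : ℂ) •
      LinearMap.proj (R := ℂ) (φ := fun _ => ℂ) w

/-- The action of `h₂ ∈ gl(1|1)` on `V^{⊗k}`: a word is scaled by its number of `y`'s. -/
def H2op (k : ℕ) : TensorV k →ₗ[ℂ] TensorV k :=
  LinearMap.pi fun w =>
    ((Finset.univ.filter (fun i => w i = true)).card : ℂ) •
      LinearMap.proj (R := ℂ) (φ := fun _ => ℂ) w

/-- The standard basis vector of `V^{⊗k}` indexed by the word `w`. -/
def bv {k : ℕ} (w : Fin k → Bool) : TensorV k := fun w' => if w' = w then 1 else 0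

/-- The word of `y ⊗ u_s ∈ V^{⊗(n+1)}`, where `u_s = u₁⊗⋯⊗u_n` has `u_i = x`
iff `i ∈ s`. -/
def wordOf {n : ℕ} (s : Finset (Fin n)) : Fin (n + 1) → Bool :=
  Fin.cons true (fun j => if j ∈ s then false else true)

/-- The highest weight vector `v_s = e · (y ⊗ u_s) ∈ V^{⊗(n+1)}`. -/
def vStd {n : ℕ} (s : Finset (Fin n)) : TensorV (n + 1) := Eop (n + 1) (bv (wordOf s))

end

/-- The subspace `V_s = span{v_s, f·v_s} ⊆ V^{⊗(n+1)}`. -/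
noncomputable def Vsub {n : ℕ} (s : Finset (Fin n)) : Submodule ℂ (TensorV (n + 1)) :=
  Submodule.span ℂ {vStd s, Fop (n + 1) (vStd s)}

open Finset Function in
lemma glSgn_eq_prod {k : ℕ} (w : Fin k → Bool) (i : Fin k) :
    glSgn w i = ∏ j, (if j < i ∧ w j = true then (-1 : ℂ) else 1) := by
  rw [glSgn, ← Finset.prod_const, Finset.prod_filter]

open Finset Function in
lemma glSgn_update_le {k : ℕ} (w : Fin k → Bool) (m i : Fin k) (b : Bool) (h : i ≤ m) :
    glSgn (update w m b) i = glSgn w i := by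
  unfold glSgn
  congr 2
  apply Finset.filter_congr
  intro j _
  by_cases hj : j = m
  · subst hj
    have : ¬ j < i := fun hh => absurd (lt_of_lt_of_le hh h) (lt_irrefl j)
    simp [this]
  · simp [Function.update_of_ne hj]

open Finset Function in
lemma glSgn_update_flip {k : ℕ} (w : Fin k → Bool) (m i : Fin k) (h : m < i) (b : Bool)
    (hb : w m ≠ b) : glSgn (update w m b) i = -glSgn w i := by
  rw [glSgn_eq_prod, glSgn_eq_prod,
    ← Finset.mul_prod_erase _ _ (Finset.mem_univ m),
    ← Finset.mul_prod_erase _ (fun j => if j < i ∧ w j = true then (-1:ℂ) else 1) (Finset.mem_univ m)]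
  have hP : ∏ j ∈ Finset.univ.erase m, (if j < i ∧ (update w m b) j = true then (-1:ℂ) else 1)
      = ∏ j ∈ Finset.univ.erase m, (if j < i ∧ w j = true then (-1:ℂ) else 1) := by
    apply Finset.prod_congr rfl
    intro j hj
    rw [Function.update_of_ne (Finset.ne_of_mem_erase hj)]
  rw [hP, Function.update_self]
  rcases Bool.eq_false_or_eq_true (w m) with hw | hw <;>
    rcases Bool.eq_false_or_eq_true b with hbb | hbb <;>
      simp_all [h]

open Finset Function in
lemma glSgn_mul_self {k : ℕ} (w : Fin k → Bool) (i : Fin k) : glSgn w i * glSgn w i = 1 := by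
  rw [glSgn, ← pow_add, Even.neg_one_pow ⟨_, rfl⟩]

lemma Eop_apply {k : ℕ} (v : TensorV k) (w : Fin k → Bool) :
    Eop k v w = ∑ i ∈ Finset.univ.filter (fun i => w i = false),
      glSgn w i * v (Function.update w i true) := by
  simp [Eop, LinearMap.pi_apply]

lemma Fop_apply {k : ℕ} (v : TensorV k) (w : Fin k → Bool) :
    Fop k v w = ∑ i ∈ Finset.univ.filter (fun i => w i = true),
      glSgn w i * v (Function.update w i false) := by
  simp [Fop, LinearMap.pi_apply]

lemma H1op_apply {k : ℕ} (v : TensorV k) (w : Fin k → Bool) :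
    H1op k v w = ((Finset.univ.filter (fun i => w i = false)).card : ℂ) * v w := by
  simp [H1op, LinearMap.pi_apply]

lemma H2op_apply {k : ℕ} (v : TensorV k) (w : Fin k → Bool) :
    H2op k v w = ((Finset.univ.filter (fun i => w i = true)).card : ℂ) * v w := by
  simp [H2op, LinearMap.pi_apply]

open Finset Function

lemma filter_update_false {k : ℕ} (w : Fin k → Bool) (i : Fin k) (hi : w i = false) :
    Finset.univ.filter (fun j => (update w i true) j = false)
      = (Finset.univ.filter (fun j => w j = false)).erase i := by
  ext j
  by_cases hj : j = i
  · subst hj; simp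
  · simp [Function.update_of_ne hj, hj]

lemma filter_update_true {k : ℕ} (w : Fin k → Bool) (i : Fin k) (hi : w i = false) :
    Finset.univ.filter (fun j => (update w i true) j = true)
      = insert i (Finset.univ.filter (fun j => w j = true)) := by
  ext j
  by_cases hj : j = i
  · subst hj; simp
  · simp [Function.update_of_ne hj, hj]

lemma filter_update_true' {k : ℕ} (w : Fin k → Bool) (i : Fin k) (hi : w i = true) :
    Finset.univ.filter (fun j => (update w i false) j = true)
      = (Finset.univ.filter (fun j => w j = true)).erase i := by
  ext j
  by_cases hj : j = i
  · subst hj; simp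
  · simp [Function.update_of_ne hj, hj]

lemma filter_update_false' {k : ℕ} (w : Fin k → Bool) (i : Fin k) (hi : w i = true) :
    Finset.univ.filter (fun j => (update w i false) j = false)
      = insert i (Finset.univ.filter (fun j => w j = false)) := by
  ext j
  by_cases hj : j = i
  · subst hj; simp
  · simp [Function.update_of_ne hj, hj]

lemma Eop_Eop {k : ℕ} (v : TensorV k) : Eop k (Eop k v) = 0 := by
  funext w
  show Eop k (Eop k v) w = 0
  rw [Eop_apply]
  set A := Finset.univ.filter (fun j => w j = false) with hA
  have hstep : ∀ i ∈ A, glSgn w i * Eop k v (update w i true)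
      = ∑ j ∈ A.erase i, glSgn w i *
        (glSgn (update w i true) j * v (update (update w i true) j true)) := by
    intro i hi
    rw [Eop_apply, filter_update_false w i (by simpa [hA] using hi), Finset.mul_sum]
  rw [Finset.sum_congr rfl hstep]
  set T : Fin k → Fin k → ℂ := fun i j => glSgn w i *
    (glSgn (update w i true) j * v (update (update w i true) j true)) with hT
  have hanti : ∀ i ∈ A, ∀ j ∈ A.erase i, T i j + T j i = 0 := by
    intro i hi j hj
    have hij : j ≠ i := (Finset.mem_erase.mp hj).1
    have hwi : w i = false := by simpa [hA] using hi
    have hwj : w j = false := by simpa [hA] using (Finset.mem_erase.mp hj).2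
    have hcomm : update (update w i true) j true = update (update w j true) i true :=
      Function.update_comm hij.symm _ _ _
    rcases lt_or_gt_of_ne hij with h | h
    · -- j < i
      rw [hT]
      simp only
      rw [glSgn_update_flip w j i h true (by simp [hwj]),
        glSgn_update_le w i j true h.le, hcomm]
      ring
    · -- i < j
      rw [hT]
      simp only
      rw [glSgn_update_flip w i j h true (by simp [hwi]),
        glSgn_update_le w j i true h.le, hcomm]
      ring
  have hswap : ∑ i ∈ A, ∑ j ∈ A.erase i, T i j = ∑ i ∈ A, ∑ j ∈ A.erase i, T j i := by
    rw [Finset.sum_comm' (s' := fun j => A.erase j) (t' := A)]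
    intro x y
    simp only [Finset.mem_erase]
    constructor
    · rintro ⟨hx, hyx, hy⟩; exact ⟨⟨Ne.symm hyx, hx⟩, hy⟩
    · rintro ⟨⟨hxy, hx⟩, hy⟩; exact ⟨hx, Ne.symm hxy, hy⟩
  have hzero : (∑ i ∈ A, ∑ j ∈ A.erase i, T i j) + (∑ i ∈ A, ∑ j ∈ A.erase i, T i j) = 0 := by
    nth_rewrite 2 [hswap]
    rw [← Finset.sum_add_distrib]
    apply Finset.sum_eq_zero
    intro i hi
    rw [← Finset.sum_add_distrib]
    exact Finset.sum_eq_zero (fun j hj => hanti i hi j hj)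
  exact add_self_eq_zero.mp hzero

lemma Fop_Fop {k : ℕ} (v : TensorV k) : Fop k (Fop k v) = 0 := by
  funext w
  show Fop k (Fop k v) w = 0
  rw [Fop_apply]
  set A := Finset.univ.filter (fun j => w j = true) with hA
  have hstep : ∀ i ∈ A, glSgn w i * Fop k v (update w i false)
      = ∑ j ∈ A.erase i, glSgn w i *
        (glSgn (update w i false) j * v (update (update w i false) j false)) := by
    intro i hi
    rw [Fop_apply, filter_update_true' w i (by simpa [hA] using hi), Finset.mul_sum]
  rw [Finset.sum_congr rfl hstep]
  set T : Fin k → Fin k → ℂ := fun i j => glSgn w i *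
    (glSgn (update w i false) j * v (update (update w i false) j false)) with hT
  have hanti : ∀ i ∈ A, ∀ j ∈ A.erase i, T i j + T j i = 0 := by
    intro i hi j hj
    have hij : j ≠ i := (Finset.mem_erase.mp hj).1
    have hwi : w i = true := by simpa [hA] using hi
    have hwj : w j = true := by simpa [hA] using (Finset.mem_erase.mp hj).2
    have hcomm : update (update w i false) j false = update (update w j false) i false :=
      Function.update_comm hij.symm _ _ _
    rcases lt_or_gt_of_ne hij with h | h
    · rw [hT]; simp only
      rw [glSgn_update_flip w j i h false (by simp [hwj]),
        glSgn_update_le w i j false h.le, hcomm]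
      ring
    · rw [hT]; simp only
      rw [glSgn_update_flip w i j h false (by simp [hwi]),
        glSgn_update_le w j i false h.le, hcomm]
      ring
  have hswap : ∑ i ∈ A, ∑ j ∈ A.erase i, T i j = ∑ i ∈ A, ∑ j ∈ A.erase i, T j i := by
    rw [Finset.sum_comm' (s' := fun j => A.erase j) (t' := A)]
    intro x y
    simp only [Finset.mem_erase]
    constructor
    · rintro ⟨hx, hyx, hy⟩; exact ⟨⟨Ne.symm hyx, hx⟩, hy⟩
    · rintro ⟨⟨hxy, hx⟩, hy⟩; exact ⟨hx, Ne.symm hxy, hy⟩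
  have hzero : (∑ i ∈ A, ∑ j ∈ A.erase i, T i j) + (∑ i ∈ A, ∑ j ∈ A.erase i, T i j) = 0 := by
    nth_rewrite 2 [hswap]
    rw [← Finset.sum_add_distrib]
    apply Finset.sum_eq_zero
    intro i hi
    rw [← Finset.sum_add_distrib]
    exact Finset.sum_eq_zero (fun j hj => hanti i hi j hj)
  exact add_self_eq_zero.mp hzero

lemma EF_add_FE {k : ℕ} (v : TensorV k) :
    Eop k (Fop k v) + Fop k (Eop k v) = (k : ℂ) • v := by
  funext w
  show Eop k (Fop k v) w + Fop k (Eop k v) w = (k : ℂ) * v w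
  set A := Finset.univ.filter (fun j => w j = false) with hA
  set B := Finset.univ.filter (fun j => w j = true) with hB
  have hiB : ∀ i ∈ A, i ∉ B := by
    intro i hi
    simp only [hA, hB, Finset.mem_filter] at *
    simp [hi.2]
  have hjA : ∀ j ∈ B, j ∉ A := by
    intro j hj
    simp only [hA, hB, Finset.mem_filter] at *
    simp [hj.2]
  have hEF : Eop k (Fop k v) w
      = (A.card : ℂ) * v w + ∑ i ∈ A, ∑ j ∈ B,
          glSgn w i * (glSgn (update w i true) j * v (update (update w i true) j false)) := by
    rw [Eop_apply]
    have hstep : ∀ i ∈ A, glSgn w i * Fop k v (update w i true)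
        = glSgn w i * glSgn w i * v w + ∑ j ∈ B,
            glSgn w i * (glSgn (update w i true) j * v (update (update w i true) j false)) := by
      intro i hi
      have hwi : w i = false := by simpa [hA] using hi
      rw [Fop_apply, filter_update_true w i hwi, Finset.sum_insert (hiB i hi), mul_add, Finset.mul_sum]
      congr 1
      rw [glSgn_update_le w i i true le_rfl, Function.update_idem]
      have : update w i false = w := by
        rw [← hwi]; exact Function.update_eq_self i w
      rw [this]; ring
    rw [Finset.sum_congr rfl hstep, Finset.sum_add_distrib]
    congr 1
    rw [Finset.sum_congr rfl (fun i _ => by rw [glSgn_mul_self]), Finset.sum_const, nsmul_eq_mul, one_mul]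
  have hFE : Fop k (Eop k v) w
      = (B.card : ℂ) * v w + ∑ j ∈ B, ∑ i ∈ A,
          glSgn w j * (glSgn (update w j false) i * v (update (update w j false) i true)) := by
    rw [Fop_apply]
    have hstep : ∀ j ∈ B, glSgn w j * Eop k v (update w j false)
        = glSgn w j * glSgn w j * v w + ∑ i ∈ A,
            glSgn w j * (glSgn (update w j false) i * v (update (update w j false) i true)) := by
      intro j hj
      have hwj : w j = true := by simpa [hB] using hj
      rw [Eop_apply, filter_update_false' w j hwj, Finset.sum_insert (hjA j hj), mul_add, Finset.mul_sum]
      congr 1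
      rw [glSgn_update_le w j j false le_rfl, Function.update_idem]
      have : update w j true = w := by
        rw [← hwj]; exact Function.update_eq_self j w
      rw [this]; ring
    rw [Finset.sum_congr rfl hstep, Finset.sum_add_distrib]
    congr 1
    rw [Finset.sum_congr rfl (fun i _ => by rw [glSgn_mul_self]), Finset.sum_const, nsmul_eq_mul, one_mul]
  rw [hEF, hFE]
  have hcross : (∑ i ∈ A, ∑ j ∈ B,
        glSgn w i * (glSgn (update w i true) j * v (update (update w i true) j false)))
      + ∑ j ∈ B, ∑ i ∈ A,
        glSgn w j * (glSgn (update w j false) i * v (update (update w j false) i true)) = 0 := by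
    rw [Finset.sum_comm (s := B) (t := A), ← Finset.sum_add_distrib]
    apply Finset.sum_eq_zero
    intro i hi
    rw [← Finset.sum_add_distrib]
    apply Finset.sum_eq_zero
    intro j hj
    have hwi : w i = false := by simpa [hA] using hi
    have hwj : w j = true := by simpa [hB] using hj
    have hij : i ≠ j := fun h => by rw [h, hwj] at hwi; exact Bool.noConfusion hwi
    have hcomm : update (update w i true) j false = update (update w j false) i true :=
      Function.update_comm hij _ _ _
    rcases lt_or_gt_of_ne hij with h | h
    · rw [glSgn_update_flip w i j h true (by simp [hwi]),
        glSgn_update_le w j i false h.le, hcomm]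
      ring
    · rw [glSgn_update_flip w j i h false (by simp [hwj]),
        glSgn_update_le w i j true h.le, hcomm]
      ring
  have hcard : (A.card : ℂ) + (B.card : ℂ) = (k : ℂ) := by
    have h2 : Finset.univ.filter (fun a => ¬ w a = false) = B := by
      simp only [hB]
      apply Finset.filter_congr
      intro j _
      simp
    have h1 : A.card + B.card = k := by
      rw [hA, ← h2, Finset.card_filter_add_card_filter_not, Finset.card_univ,
        Fintype.card_fin]
    rw [← Nat.cast_add, h1]
  linear_combination hcross + v w * hcard

lemma H1_E {k : ℕ} (v : TensorV k) :
    H1op k (Eop k v) = Eop k (H1op k v) + Eop k v := by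
  funext w
  show H1op k (Eop k v) w = Eop k (H1op k v) w + Eop k v w
  rw [H1op_apply, Eop_apply v, Eop_apply (H1op k v), Finset.mul_sum, ← Finset.sum_add_distrib]
  apply Finset.sum_congr rfl
  intro i hi
  have hwi : w i = false := by simpa using hi
  rw [H1op_apply, filter_update_false w i hwi]
  have hc : ((Finset.univ.filter (fun j => w j = false)).card : ℂ)
      = (((Finset.univ.filter (fun j => w j = false)).erase i).card : ℂ) + 1 := by
    rw [← Nat.cast_add_one, Finset.card_erase_add_one hi]
  rw [hc]; ring

lemma H2_E {k : ℕ} (v : TensorV k) :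
    H2op k (Eop k v) = Eop k (H2op k v) - Eop k v := by
  funext w
  show H2op k (Eop k v) w = Eop k (H2op k v) w - Eop k v w
  rw [H2op_apply, Eop_apply v, Eop_apply (H2op k v), Finset.mul_sum, ← Finset.sum_sub_distrib]
  apply Finset.sum_congr rfl
  intro i hi
  have hwi : w i = false := by simpa using hi
  have hiB : i ∉ Finset.univ.filter (fun j => w j = true) := by simp [hwi]
  rw [H2op_apply, filter_update_true w i hwi]
  rw [Finset.card_insert_of_notMem hiB, Nat.cast_add_one]
  ring

lemma H1_F {k : ℕ} (v : TensorV k) :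
    H1op k (Fop k v) = Fop k (H1op k v) - Fop k v := by
  funext w
  show H1op k (Fop k v) w = Fop k (H1op k v) w - Fop k v w
  rw [H1op_apply, Fop_apply v, Fop_apply (H1op k v), Finset.mul_sum, ← Finset.sum_sub_distrib]
  apply Finset.sum_congr rfl
  intro i hi
  have hwi : w i = true := by simpa using hi
  have hiA : i ∉ Finset.univ.filter (fun j => w j = false) := by simp [hwi]
  rw [H1op_apply, filter_update_false' w i hwi]
  rw [Finset.card_insert_of_notMem hiA, Nat.cast_add_one]
  ring

lemma H2_F {k : ℕ} (v : TensorV k) :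
    H2op k (Fop k v) = Fop k (H2op k v) + Fop k v := by
  funext w
  show H2op k (Fop k v) w = Fop k (H2op k v) w + Fop k v w
  rw [H2op_apply, Fop_apply v, Fop_apply (H2op k v), Finset.mul_sum, ← Finset.sum_add_distrib]
  apply Finset.sum_congr rfl
  intro i hi
  have hwi : w i = true := by simpa using hi
  rw [H2op_apply, filter_update_true' w i hwi]
  have hc : ((Finset.univ.filter (fun j => w j = true)).card : ℂ)
      = (((Finset.univ.filter (fun j => w j = true)).erase i).card : ℂ) + 1 := by
    rw [← Nat.cast_add_one, Finset.card_erase_add_one (by simpa using hi)]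
  rw [hc]; ring

lemma H1_bv {k : ℕ} (u : Fin k → Bool) :
    H1op k (bv u) = ((Finset.univ.filter (fun i => u i = false)).card : ℂ) • bv u := by
  funext w
  show H1op k (bv u) w = _ * bv u w
  rw [H1op_apply]
  by_cases h : w = u
  · subst h; rfl
  · simp [bv, h]

lemma H2_bv {k : ℕ} (u : Fin k → Bool) :
    H2op k (bv u) = ((Finset.univ.filter (fun i => u i = true)).card : ℂ) • bv u := by
  funext w
  show H2op k (bv u) w = _ * bv u w
  rw [H2op_apply]
  by_cases h : w = u
  · subst h; rfl
  · simp [bv, h]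

lemma card_x_wordOf {n : ℕ} (s : Finset (Fin n)) :
    (Finset.univ.filter (fun i => wordOf s i = false)).card = s.card := by
  rw [Finset.card_filter]
  rw [Fin.sum_univ_succ]
  have h0 : wordOf s 0 = true := by simp [wordOf]
  have hs : ∀ j : Fin n, wordOf s j.succ = (if j ∈ s then false else true) := by
    intro j; simp [wordOf]
  simp only [h0, hs]
  rw [if_neg (by simp)]
  rw [zero_add]
  have : ∀ j : Fin n, (if (if j ∈ s then false else true) = false then 1 else 0)
      = (if j ∈ s then 1 else 0) := by
    intro j; by_cases hj : j ∈ s <;> simp [hj]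
  rw [Finset.sum_congr rfl (fun j _ => this j)]
  simp

lemma card_y_wordOf {n : ℕ} (s : Finset (Fin n)) :
    ((Finset.univ.filter (fun i => wordOf s i = true)).card : ℂ)
      = (n : ℂ) + 1 - (s.card : ℂ) := by
  have h2 : Finset.univ.filter (fun a => ¬ wordOf s a = false)
      = Finset.univ.filter (fun i => wordOf s i = true) := by
    apply Finset.filter_congr
    intro j _; simp
  have h1 : s.card + (Finset.univ.filter (fun i => wordOf s i = true)).card = n + 1 := by
    rw [← card_x_wordOf s, ← h2, Finset.card_filter_add_card_filter_not,
      Finset.card_univ, Fintype.card_fin]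
  have := congrArg (fun m : ℕ => (m : ℂ)) h1
  push_cast at this
  linear_combination this

lemma vStd_eval {n : ℕ} (s : Finset (Fin n)) :
    vStd s (Function.update (wordOf s) 0 false) = 1 := by
  have hu0 : wordOf s 0 = true := by simp [wordOf]
  set u := wordOf s with hu
  set w := Function.update u 0 false with hw
  rw [vStd, Eop_apply]
  rw [Finset.sum_eq_single 0]
  · have h1 : Function.update w 0 true = u := by
      rw [hw, Function.update_idem, ← hu0]
      exact Function.update_eq_self 0 u
    have h2 : glSgn w 0 = 1 := by
      rw [glSgn]
      have he : Finset.univ.filter (fun j => j < (0 : Fin (n+1)) ∧ w j = true) = ∅ := by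
        apply Finset.filter_eq_empty_iff.mpr
        intro j _
        simp [Fin.not_lt_zero]
      rw [he, Finset.card_empty, pow_zero]
    rw [h1, h2, one_mul, bv, if_pos rfl]
  · intro i _ hne
    have : Function.update w i true ≠ u := by
      intro heq
      have h0 := congrFun heq 0
      rw [Function.update_of_ne (Ne.symm hne)] at h0
      rw [hw, Function.update_self] at h0
      rw [hu0] at h0
      exact Bool.noConfusion h0
    rw [bv, if_neg this, mul_zero]
  · intro h
    exfalso
    apply h
    simp [hw]

/-- Each `V_s = span{v_s, f·v_s}` is a 2-dimensional irreducible `gl(1|1)`-submodule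
of `V^{⊗k}` (`k = n+1`), with highest weight vector `v_s` of weight `[|s|+1, k-1-|s|]`:
`e·v_s = 0`, `f·(f·v_s) = 0`, `e·(f·v_s) = k·v_s`, `h₁·v_s = (|s|+1)v_s`,
`h₂·v_s = (k-1-|s|)v_s`, `h₁·(f v_s) = |s|·(f v_s)`, `h₂·(f v_s) = (k-|s|)·(f v_s)`. -/
theorem Vsub_irreducible (n : ℕ) (s : Finset (Fin n)) :
    Module.finrank ℂ (Vsub s) = 2 ∧
    Eop (n + 1) (vStd s) = 0 ∧
    Fop (n + 1) (Fop (n + 1) (vStd s)) = 0 ∧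
    Eop (n + 1) (Fop (n + 1) (vStd s)) = ((n : ℂ) + 1) • vStd s ∧
    H1op (n + 1) (vStd s) = ((s.card : ℂ) + 1) • vStd s ∧
    H2op (n + 1) (vStd s) = ((n : ℂ) - (s.card : ℂ)) • vStd s ∧
    H1op (n + 1) (Fop (n + 1) (vStd s)) = (s.card : ℂ) • Fop (n + 1) (vStd s) ∧
    H2op (n + 1) (Fop (n + 1) (vStd s)) = ((n : ℂ) + 1 - (s.card : ℂ)) • Fop (n + 1) (vStd s) ∧
    ∀ N : Submodule ℂ (TensorV (n + 1)), N ≤ Vsub s →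
      (∀ x ∈ N, Eop (n + 1) x ∈ N) → (∀ x ∈ N, Fop (n + 1) x ∈ N) →
      (∀ x ∈ N, H1op (n + 1) x ∈ N) → (∀ x ∈ N, H2op (n + 1) x ∈ N) →
      N ≠ ⊥ → N = Vsub s := by
  set v := vStd s with hv
  set fv := Fop (n + 1) (vStd s) with hfv
  set c := (s.card : ℂ) with hc
  have hEv : Eop (n + 1) v = 0 := by rw [hv, vStd]; exact Eop_Eop _
  have hFFv : Fop (n + 1) fv = 0 := by rw [hfv]; exact Fop_Fop (vStd s)
  have hEFv : Eop (n + 1) fv = ((n : ℂ) + 1) • v := by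
    have h := EF_add_FE (k := n + 1) v
    rw [hEv, map_zero, add_zero] at h
    rw [hfv, ← hv, h]
    push_cast
    rfl
  have hH1v : H1op (n + 1) v = (c + 1) • v := by
    have h := H1_E (k := n + 1) (bv (wordOf s))
    rw [H1_bv, map_smul, card_x_wordOf] at h
    rw [hv, vStd, h, ← hc, add_smul, one_smul]
  have hH2v : H2op (n + 1) v = ((n : ℂ) - c) • v := by
    have h := H2_E (k := n + 1) (bv (wordOf s))
    rw [H2_bv, map_smul, card_y_wordOf] at h
    rw [hv, vStd, h, ← hc]
    module
  have hH1f : H1op (n + 1) fv = c • fv := by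
    rw [hfv, ← hv, H1_F, hH1v, map_smul]
    module
  have hH2f : H2op (n + 1) fv = ((n : ℂ) + 1 - c) • fv := by
    rw [hfv, ← hv, H2_F, hH2v, map_smul]
    module
  have hvne : v ≠ 0 := by
    intro h
    have h1 := vStd_eval s
    rw [← hv, h] at h1
    simp at h1
  have hn1 : (n : ℂ) + 1 ≠ 0 := by
    have : ((n + 1 : ℕ) : ℂ) ≠ 0 := Nat.cast_ne_zero.mpr n.succ_ne_zero
    push_cast at this
    exact this
  have hfvne : fv ≠ 0 := by
    intro h
    rw [h, map_zero] at hEFv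
    exact hvne ((smul_eq_zero.mp hEFv.symm).resolve_left hn1)
  have hli : LinearIndependent ℂ ![v, fv] := by
    rw [LinearIndependent.pair_iff]
    intro a b hab
    have h1 : a • ((c + 1) • v) + b • (c • fv) = 0 := by
      have h0 := congrArg (fun z => H1op (n + 1) z) hab
      simpa [map_add, map_smul, hH1v, hH1f] using h0
    have h2 : a • v = 0 := by
      calc a • v = (a • ((c + 1) • v) + b • (c • fv)) - c • (a • v + b • fv) := by module
        _ = 0 - c • (0 : TensorV (n + 1)) := by rw [h1, hab]
        _ = 0 := by simp
    have ha : a = 0 := (smul_eq_zero.mp h2).resolve_right hvne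
    have hb : b = 0 := by
      rw [ha, zero_smul, zero_add] at hab
      exact (smul_eq_zero.mp hab).resolve_right hfvne
    exact ⟨ha, hb⟩
  have hset : ({vStd s, Fop (n + 1) (vStd s)} : Set (TensorV (n + 1))) = Set.range ![v, fv] := by
    ext z
    constructor
    · rintro (rfl | rfl)
      · exact ⟨0, rfl⟩
      · exact ⟨1, rfl⟩
    · rintro ⟨i, rfl⟩
      fin_cases i
      · left; rfl
      · right; rfl
  have hrank : Module.finrank ℂ (Vsub s) = 2 := by
    rw [Vsub, hset, finrank_span_eq_card hli, Fintype.card_fin]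
  refine ⟨hrank, hEv, hFFv, hEFv, hH1v, hH2v, hH1f, hH2f, ?_⟩
  intro N hNle hNE hNF _ _ hNbot
  obtain ⟨z, hzN, hzne⟩ := Submodule.exists_mem_ne_zero_of_ne_bot hNbot
  have hzV : z ∈ Vsub s := hNle hzN
  rw [Vsub, Submodule.mem_span_pair] at hzV
  obtain ⟨a, b, hab⟩ := hzV
  have hvN : v ∈ N := by
    by_cases hb : b = 0
    · have ha : a ≠ 0 := by
        intro ha
        rw [ha, hb, zero_smul, zero_smul, add_zero] at hab
        exact hzne hab.symm
      have : v = a⁻¹ • z := by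
        rw [← hab, hb, zero_smul, add_zero, smul_smul, inv_mul_cancel₀ ha, one_smul]
      rw [this]
      exact N.smul_mem _ hzN
    · have hEz : Eop (n + 1) z ∈ N := hNE z hzN
      have hEz' : Eop (n + 1) z = (b * ((n : ℂ) + 1)) • v := by
        rw [← hab, map_add, map_smul, map_smul, hEv, smul_zero, zero_add, ← hfv, hEFv,
          smul_smul]
      have : v = (b * ((n : ℂ) + 1))⁻¹ • Eop (n + 1) z := by
        rw [hEz', smul_smul, inv_mul_cancel₀ (mul_ne_zero hb hn1), one_smul]
      rw [this]
      exact N.smul_mem _ hEz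
  have hfvN : fv ∈ N := hNF v hvN
  apply le_antisymm hNle
  rw [Vsub]
  apply Submodule.span_le.mpr
  intro x hx
  rcases hx with rfl | hx
  · exact hvN
  · rw [Set.mem_singleton_iff] at hx
    subst hx
    exact hfvN
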